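/- arXiv:2111.02837 — 8 statements merged into one kernel-verified Lean document; each statement's English description precedes it below -/
import Mathlib

section
/- If A and B are finite-rank self-adjoint operators on a complex Hilbert space that are unitarily conjugate (lie in the same conjugacy class), then the rank of B - A is not equal to 1. -/
/-!
Restricting a finite-rank operator to any finite-dimensional subspace containing its range gives
the same trace (cyclicity of the trace), and conjugation by `U` preserves it, so `U A U⁻¹ - A` has
trace zero. A self-adjoint operator `T` of rank one does not: its range meets its kernel only in
`0`, so `T` acts on its one-dimensional range as a nonzero scalar, which is its trace.
-/

open LinearMap Module

section Trace

variable {K M N : Type*} [Field K] [AddCommGroup M] [Module K M] [AddCommGroup N] [Module K N]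

theorem LinearMap.trace_restrict_eq_of_le {V W : Submodule K M} [FiniteDimensional K V]
    [FiniteDimensional K W] (hVW : V ≤ W) (T : M →ₗ[K] M) (hT : ∀ x, T x ∈ V) :
    trace K W (T.restrict fun x _ ↦ hVW (hT x)) = trace K V (T.restrict fun x _ ↦ hT x) := by
  let g : W →ₗ[K] V := (T ∘ₗ W.subtype).codRestrict V fun _ ↦ hT _
  exact trace_comp_comm' g (Submodule.inclusion hVW)

theorem LinearEquiv.conj_apply_mem_map {V : Submodule K M} (e : M ≃ₗ[K] N) {T : M →ₗ[K] M}
    (hT : ∀ x, T x ∈ V) (x : N) : e.conj T x ∈ V.map (e : M →ₗ[K] N) :=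
  Submodule.mem_map_of_mem (hT _)

theorem LinearMap.trace_restrict_conj {V : Submodule K M} [FiniteDimensional K V]
    (e : M ≃ₗ[K] N) (T : M →ₗ[K] M) (hT : ∀ x, T x ∈ V) :
    trace K (V.map (e : M →ₗ[K] N)) ((e.conj T).restrict fun x _ ↦ e.conj_apply_mem_map hT x) =
      trace K V (T.restrict fun x _ ↦ hT x) := by
  rw [← trace_conj' _ (e.submoduleMap V)]
  congr 1

theorem LinearMap.trace_restrict_conj_sub_self {V W : Submodule K M} [FiniteDimensional K V]
    [FiniteDimensional K W] (e : M ≃ₗ[K] M) (T : M →ₗ[K] M) (hT : ∀ x, T x ∈ V)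
    (hVW : V ≤ W) (heVW : V.map (e : M →ₗ[K] M) ≤ W) :
    trace K W ((e.conj T - T).restrict fun x _ ↦
      W.sub_mem (heVW (e.conj_apply_mem_map hT x)) (hVW (hT x))) = 0 := by
  have hsub : (e.conj T - T).restrict (fun x (_ : x ∈ W) ↦
      W.sub_mem (heVW (e.conj_apply_mem_map hT x)) (hVW (hT x))) =
      (e.conj T).restrict (fun x (_ : x ∈ W) ↦ heVW (e.conj_apply_mem_map hT x)) -
        T.restrict fun x (_ : x ∈ W) ↦ hVW (hT x) := rfl
  rw [hsub, map_sub, trace_restrict_eq_of_le heVW _ (e.conj_apply_mem_map hT),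
    trace_restrict_eq_of_le hVW _ hT, trace_restrict_conj e T hT, sub_self]

theorem LinearMap.trace_ne_zero_of_finrank_eq_one (h : finrank K M = 1) {f : M →ₗ[K] M}
    (hf : f ≠ 0) : trace K M f ≠ 0 := by
  obtain ⟨c, rfl, -⟩ := f.existsUnique_eq_smul_id_of_finrank_eq_one h
  have : Module.Finite K M := Module.finite_of_finrank_eq_succ h
  simp only [map_smul, trace_id, h, Nat.cast_one, smul_eq_mul, mul_one]
  rintro rfl
  simp at hf

end Trace

section Symmetric

variable {𝕜 E : Type*} [RCLike 𝕜] [NormedAddCommGroup E] [InnerProductSpace 𝕜 E]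

theorem LinearMap.IsSymmetric.disjoint_range_ker {T : E →ₗ[𝕜] E} (hT : T.IsSymmetric) :
    Disjoint (range T) (ker T) :=
  hT.orthogonal_range ▸ (range T).orthogonal_disjoint

theorem LinearMap.IsSymmetric.trace_restrict_range_ne_zero {T : E →ₗ[𝕜] E} (hT : T.IsSymmetric)
    (h : finrank 𝕜 (range T) = 1) :
    trace 𝕜 (range T) (T.restrict fun x _ ↦ mem_range_self T x) ≠ 0 := by
  refine trace_ne_zero_of_finrank_eq_one h fun h0 ↦ ?_
  have : Nontrivial (range T) := Module.nontrivial_of_finrank_eq_succ h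
  obtain ⟨⟨v, hv⟩, hv0⟩ := exists_ne (0 : range T)
  have hker : v ∈ ker T := by
    simpa using congrArg Subtype.val (LinearMap.congr_fun h0 ⟨v, hv⟩)
  exact hv0 (Subtype.ext (Submodule.disjoint_def.mp hT.disjoint_range_ker v hv hker))

end Symmetric

theorem stmt_0_general {H : Type*} [NormedAddCommGroup H] [InnerProductSpace ℂ H]
    (A B : H →ₗ[ℂ] H)
    (hA : LinearMap.IsSymmetric A) (hB : LinearMap.IsSymmetric B)
    (hAfr : FiniteDimensional ℂ (LinearMap.range A))
    (U : H ≃ₗᵢ[ℂ] H) (hconj : ∀ x, B x = U (A (U.symm x))) :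
    Module.finrank ℂ (LinearMap.range (B - A)) ≠ 1 := by
  intro hrank
  obtain rfl : B = U.toLinearEquiv.conj A := by ext x; simp [hconj, LinearEquiv.conj_apply]
  set e := U.toLinearEquiv
  set W := range A ⊔ (range A).map (e : H →ₗ[ℂ] H)
  have hTW := trace_restrict_conj_sub_self e A (mem_range_self A) le_sup_left
    (le_sup_right : _ ≤ W)
  have : FiniteDimensional ℂ (range (e.conj A - A)) := Module.finite_of_finrank_eq_succ hrank
  have hrange : range (e.conj A - A) ≤ W := by
    rintro _ ⟨x, rfl⟩
    exact W.sub_mem (Submodule.mem_sup_right (e.conj_apply_mem_map (mem_range_self A) x))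
      (Submodule.mem_sup_left (mem_range_self A x))
  rw [trace_restrict_eq_of_le hrange _ (mem_range_self _)] at hTW
  exact (hB.sub hA).trace_restrict_range_ne_zero hrank hTW

/-- If `A` and `B` are finite-rank self-adjoint (symmetric) operators on a complex
Hilbert space that are unitarily conjugate, then the rank of `B - A` is not `1`. -/
theorem stmt_0 {H : Type*} [NormedAddCommGroup H] [InnerProductSpace ℂ H] [CompleteSpace H]
    (A B : H →ₗ[ℂ] H)
    (hA : LinearMap.IsSymmetric A) (hB : LinearMap.IsSymmetric B)
    (hAfr : FiniteDimensional ℂ (LinearMap.range A))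
    (hBfr : FiniteDimensional ℂ (LinearMap.range B))
    (U : H ≃ₗᵢ[ℂ] H) (hconj : ∀ x, B x = U (A (U.symm x))) :
    Module.finrank ℂ (LinearMap.range (B - A)) ≠ 1 :=
  stmt_0_general A B hA hB hAfr U hconj
end

section
/- If X and Y are subspaces of a finite-dimensional inner product space of the same dimension m, then X and Y are adjacent (dim(X ∩ Y) = m - 1) if and only if their orthogonal complements X^⊥ and Y^⊥ are adjacent (dim(X^⊥ ∩ Y^⊥) = dim X^⊥ - 1). -/
/-- In a finite-dimensional complex inner product space, two subspaces of the same
dimension `m` (with `1 ≤ m ≤ dim V - 1`) are adjacent iff their orthogonal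
complements are adjacent. -/
theorem stmt_2 {V : Type*} [NormedAddCommGroup V] [InnerProductSpace ℂ V]
    [FiniteDimensional ℂ V]
    (X Y : Submodule ℂ V) (m : ℕ) (hm : 1 ≤ m) (hm' : m ≤ Module.finrank ℂ V - 1)
    (hX : Module.finrank ℂ X = m) (hY : Module.finrank ℂ Y = m) :
    Module.finrank ℂ ↥(X ⊓ Y) = m - 1 ↔
      Module.finrank ℂ ↥(Xᗮ ⊓ Yᗮ) = Module.finrank ℂ Xᗮ - 1 := by
  rw [Submodule.inf_orthogonal]
  have e1 := Submodule.finrank_sup_add_finrank_inf_eq X Y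
  have e2 := Submodule.finrank_add_finrank_orthogonal (K := X ⊔ Y)
  have e3 := Submodule.finrank_add_finrank_orthogonal (K := X)
  have h4 : Module.finrank ℂ (X ⊔ Y : Submodule ℂ V) ≤ Module.finrank ℂ V :=
    Submodule.finrank_le _
  have h5 : Module.finrank ℂ ↥(X ⊓ Y) ≤ m := hX ▸ Submodule.finrank_mono inf_le_left
  omega
end

section
/- Let W be a finite-dimensional inner product space. If X, Y ≤ W are subspaces of the same dimension that are adjacent, then their orthogonal complements within W are adjacent. Furthermore, if X₁ + X₂ = Y₁ + Y₂ = W with X₂ = X₁^⊥ ∩ W and Y₂ = Y₁^⊥ ∩ W, and X₁ is adjacent to Y₁, then X₂ is adjacent to Y₂. -/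
/-- If `X₁` and `Y₁` are adjacent subspaces of the same dimension `m` in a
finite-dimensional complex inner product space `W` (with `1 ≤ m ≤ dim W - 1`), and
`X₂ = X₁ᗮ`, `Y₂ = Y₁ᗮ` are their orthogonal complements in `W`, then `X₂` and `Y₂`
are adjacent. -/
theorem stmt_9 {W : Type*} [NormedAddCommGroup W] [InnerProductSpace ℂ W]
    [FiniteDimensional ℂ W]
    (X₁ Y₁ : Submodule ℂ W) (m : ℕ) (hm : 1 ≤ m) (hm' : m ≤ Module.finrank ℂ W - 1)
    (hX : Module.finrank ℂ X₁ = m) (hY : Module.finrank ℂ Y₁ = m)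
    (X₂ Y₂ : Submodule ℂ W) (hX₂ : X₂ = X₁ᗮ) (hY₂ : Y₂ = Y₁ᗮ)
    (hadj : Module.finrank ℂ ↥(X₁ ⊓ Y₁) + 1 = m) :
    Module.finrank ℂ ↥(X₂ ⊓ Y₂) + 1 = Module.finrank ℂ X₂ := by
  subst hX₂ hY₂
  rw [Submodule.inf_orthogonal]
  have h1 := Submodule.finrank_sup_add_finrank_inf_eq X₁ Y₁
  have h2 := Submodule.finrank_add_finrank_orthogonal (K := X₁ ⊔ Y₁)
  have h3 := Submodule.finrank_add_finrank_orthogonal (K := X₁)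
  have h4 : Module.finrank ℂ X₁ ≤ Module.finrank ℂ W :=
    Submodule.finrank_le X₁
  have h5 : 1 ≤ Module.finrank ℂ W := by omega
  omega
end

section
/- Every automorphism of the Johnson graph J(I, 2), for a finite index set I with |I| ≠ 4 and |I| ≥ 3, is induced by a permutation of I; that is, for every graph automorphism τ of J(I,2) there is a permutation π of I with τ({i,j}) = {π(i), π(j)} for all 2-element subsets {i,j}. -/
/-
The star of `i`, the `|I| - 1` pairs containing `i`, is a clique of `J(I,2)`. A clique of
pairwise intersecting pairs either has a common point or consists of the three sides of a
triangle; as `|I| - 1 ≠ 3`, an automorphism `τ` maps every star into, hence onto, a star: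
`τ (star i) = star (f i)`. Distinct points have distinct stars, so `f` is a permutation, and
`τ {i, j}` lies in `star (f i) ∩ star (f j)`, i.e. equals `{f i, f j}`.
-/

/-- The Johnson graph `J(I,2)`: vertices are the `2`-element subsets of `I`, two
distinct subsets being adjacent iff they intersect. -/
def johnsonGraph (ι : Type*) [DecidableEq ι] :
    SimpleGraph {s : Finset ι // s.card = 2} where
  Adj s t := s ≠ t ∧ (s.val ∩ t.val).Nonempty
  symm := by
    constructor
    rintro s t ⟨h1, h2⟩
    exact ⟨h1.symm, by rwa [Finset.inter_comm]⟩
  loopless := by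
    constructor
    rintro s ⟨h, -⟩
    exact h rfl

namespace Finset

variable {ι : Type*} [DecidableEq ι]

lemma eq_pair_of_mem {s : Finset ι} (hs : s.card = 2) {a b : ι} (ha : a ∈ s) (hb : b ∈ s)
    (hab : a ≠ b) : s = {a, b} :=
  (eq_of_subset_of_card_le (insert_subset ha (singleton_subset_iff.2 hb))
    (by rw [hs, card_pair hab])).symm

lemma exists_eq_pair_of_mem {s : Finset ι} (hs : s.card = 2) {a : ι} (ha : a ∈ s) :
    ∃ b, a ≠ b ∧ s = {a, b} := by
  obtain ⟨b, hb, hba⟩ := exists_mem_ne (by omega : 1 < s.card) a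
  exact ⟨b, hba.symm, eq_pair_of_mem hs ha hb hba.symm⟩

lemma mem_of_pair_inter_nonempty {s : Finset ι} {a b : ι} (ha : a ∉ s)
    (h : ({a, b} ∩ s).Nonempty) : b ∈ s := by
  obtain ⟨c, hc⟩ := h
  rw [mem_inter, mem_insert, mem_singleton] at hc
  rcases hc with ⟨rfl | rfl, hc⟩
  · exact absurd hc ha
  · exact hc

end Finset

open Finset

lemma SimpleGraph.IsClique.image {α β : Type*} {G : SimpleGraph α} {H : SimpleGraph β}
    {S : Set α} (hS : G.IsClique S) (τ : G ≃g H) : H.IsClique (τ '' S) := by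
  rintro _ ⟨s, hs, rfl⟩ _ ⟨t, ht, rfl⟩ hst
  exact τ.map_adj_iff.2 (hS hs ht (ne_of_apply_ne τ hst))

namespace JohnsonGraph

variable {ι : Type*} [DecidableEq ι]

lemma inter_nonempty_of_isClique {S : Set {s : Finset ι // s.card = 2}}
    (hS : (johnsonGraph ι).IsClique S) {s t : {s : Finset ι // s.card = 2}} (hs : s ∈ S)
    (ht : t ∈ S) : (s.val ∩ t.val).Nonempty := by
  rcases eq_or_ne s t with rfl | hst
  · rw [inter_self, ← card_pos, s.prop]
    norm_num
  · exact (hS hs ht hst).2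

lemma subset_of_isClique_of_triangle {S : Set {s : Finset ι // s.card = 2}}
    (hS : (johnsonGraph ι).IsClique S) {p q r : {s : Finset ι // s.card = 2}}
    (hp : p ∈ S) (hq : q ∈ S) (hr : r ∈ S) {x y z : ι} (hxy : x ≠ y) (hxz : x ≠ z)
    (hyz : y ≠ z) (hpv : p.val = {x, y}) (hqv : q.val = {y, z}) (hrv : r.val = {x, z})
    {t : {s : Finset ι // s.card = 2}} (ht : t ∈ S) : t.val ⊆ {x, y, z} := by
  intro u hu
  by_contra hu'
  obtain ⟨v, -, htuv⟩ := exists_eq_pair_of_mem t.prop hu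
  have hv {s} (hs : s ∈ S) (hsT : s.val ⊆ {x, y, z}) : v ∈ s.val :=
    mem_of_pair_inter_nonempty (fun h => hu' (hsT h)) (htuv ▸ inter_nonempty_of_isClique hS ht hs)
  have hvp := hv hp (by simp [hpv, insert_subset_iff])
  have hvq := hv hq (by simp [hqv])
  have hvr := hv hr (by simp [hrv, insert_subset_iff])
  simp only [hpv, hqv, hrv, mem_insert, mem_singleton] at hvp hvq hvr
  grind

lemma exists_forall_mem_of_isClique {S : Finset {s : Finset ι // s.card = 2}}
    (hS : (johnsonGraph ι).IsClique (S : Set _)) (hne : S.Nonempty) (hcard : S.card ≠ 3) :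
    ∃ x, ∀ s ∈ S, x ∈ s.val := by
  by_contra! h
  have hmeet {s t} (hs : s ∈ S) (ht : t ∈ S) : (s.val ∩ t.val).Nonempty :=
    inter_nonempty_of_isClique hS hs ht
  -- with `p = {x, y}`, `q ∌ x` and `r ∌ y`, the edges `p, q, r` form a triangle containing `S`
  obtain ⟨p, hp⟩ := hne
  obtain ⟨x, y, hxy, hpxy⟩ := card_eq_two.1 p.prop
  obtain ⟨q, hq, hxq⟩ := h x
  obtain ⟨r, hr, hyr⟩ := h y
  have hyq : y ∈ q.val := mem_of_pair_inter_nonempty hxq (hpxy ▸ hmeet hp hq)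
  obtain ⟨z, hyz, hqyz⟩ := exists_eq_pair_of_mem q.prop hyq
  have hxz : x ≠ z := by rintro rfl; exact hxq (by simp [hqyz])
  have hxr : x ∈ r.val :=
    mem_of_pair_inter_nonempty hyr (by rw [pair_comm, ← hpxy]; exact hmeet hp hr)
  have hzr : z ∈ r.val := mem_of_pair_inter_nonempty hyr (hqyz ▸ hmeet hq hr)
  have hrxz : r.val = {x, z} := eq_pair_of_mem r.prop hxr hzr hxz
  have hsub (t) (ht : t ∈ S) : t.val ⊆ {x, y, z} :=
    subset_of_isClique_of_triangle hS hp hq hr hxy hxz hyz hpxy hqyz hrxz ht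
  have hpq : p ≠ q := by rintro rfl; simp [hpxy] at hxq
  have hpr : p ≠ r := by rintro rfl; simp [hpxy] at hyr
  have hqr : q ≠ r := fun h => hyr (h ▸ hyq)
  apply hcard
  apply le_antisymm
  · calc S.card ≤ (({x, y, z} : Finset ι).powersetCard 2).card :=
          card_le_card_of_injOn Subtype.val (fun t ht => mem_powersetCard.2 ⟨hsub t ht, t.prop⟩)
            Subtype.val_injective.injOn
      _ = 3 := by rw [card_powersetCard, card_eq_three.2 ⟨x, y, z, hxy, hxz, hyz, rfl⟩]; rfl
  · calc 3 = ({p, q, r} : Finset _).card := (card_eq_three.2 ⟨p, q, r, hpq, hpr, hqr, rfl⟩).symm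
      _ ≤ S.card := card_le_card (by simp [insert_subset_iff, hp, hq, hr])

variable [Fintype ι]

def star (i : ι) : Finset {s : Finset ι // s.card = 2} := univ.filter (i ∈ ·.val)

@[simp]
lemma mem_star {i : ι} {s : {s : Finset ι // s.card = 2}} : s ∈ star i ↔ i ∈ s.val := by
  simp [star]

lemma card_star (i : ι) : (star i).card = Fintype.card ι - 1 := by
  rw [← card_univ, ← card_erase_of_mem (mem_univ i)]
  symm
  refine card_bij (fun a ha => ⟨{i, a}, card_pair (ne_of_mem_erase ha).symm⟩) ?_ ?_ ?_
  · simp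
  · intro a ha b _ hab
    have hpair : ({i, a} : Finset ι) = {i, b} := congrArg Subtype.val hab
    have : a ∈ ({i, b} : Finset ι) := by rw [← hpair]; simp
    simpa [ne_of_mem_erase ha] using this
  · intro s hs
    obtain ⟨a, hia, hs⟩ := exists_eq_pair_of_mem s.prop (mem_star.1 hs)
    exact ⟨a, mem_erase.2 ⟨hia.symm, mem_univ a⟩, Subtype.ext hs.symm⟩

lemma isClique_star (i : ι) : (johnsonGraph ι).IsClique (star i : Set _) :=
  fun _ hs _ ht hst => ⟨hst, i, mem_inter.2 ⟨mem_star.1 hs, mem_star.1 ht⟩⟩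

lemma star_injective (h3 : 3 ≤ Fintype.card ι) : Function.Injective (star (ι := ι)) := by
  intro i j hij
  by_contra hne
  obtain ⟨k, -, hk⟩ := exists_mem_notMem_of_card_lt_card
    (s := {i, j}) (t := univ) (by rw [card_univ, card_pair hne]; omega)
  have hki : k ≠ i := fun h => hk (by simp [h])
  have hkj : k ≠ j := fun h => hk (by simp [h])
  have hmem : (⟨{i, k}, card_pair hki.symm⟩ : {s : Finset ι // s.card = 2}) ∈ star j := by
    rw [← hij, mem_star]; simp
  simp [Ne.symm hkj] at hmem
  exact hne hmem.symm

lemma exists_image_star_eq (h3 : 3 ≤ Fintype.card ι) (h4 : Fintype.card ι ≠ 4)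
    (τ : johnsonGraph ι ≃g johnsonGraph ι) (i : ι) : ∃ x, (star i).image τ = star x := by
  have hcard : ((star i).image τ).card = Fintype.card ι - 1 := by
    rw [card_image_of_injective _ τ.injective, card_star]
  obtain ⟨x, hx⟩ := exists_forall_mem_of_isClique (S := (star i).image τ)
    (by rw [coe_image]; exact (isClique_star i).image τ)
    (card_pos.1 (by omega)) (by omega)
  refine ⟨x, eq_of_subset_of_card_le (fun s hs => mem_star.2 (hx s hs)) ?_⟩
  rw [hcard, card_star]

end JohnsonGraph

/-- For a finite index set `I` with `|I| ≥ 3` and `|I| ≠ 4`, every automorphism of the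
Johnson graph `J(I,2)` is induced by a permutation of `I`. -/
theorem stmt_10 {ι : Type*} [DecidableEq ι] [Fintype ι]
    (h3 : 3 ≤ Fintype.card ι) (h4 : Fintype.card ι ≠ 4)
    (τ : johnsonGraph ι ≃g johnsonGraph ι) :
    ∃ π : Equiv.Perm ι, ∀ s : {s : Finset ι // s.card = 2},
      (τ s).val = s.val.image π := by
  choose f hf using JohnsonGraph.exists_image_star_eq h3 h4 τ
  have hf_inj : Function.Injective f := fun i j hij =>
    JohnsonGraph.star_injective h3 (image_injective τ.injective ((hf i).trans (hij ▸ (hf j).symm)))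
  have hf_mem : ∀ s i, i ∈ s.val → f i ∈ (τ s).val := fun s i hi =>
    JohnsonGraph.mem_star.1 (hf i ▸ mem_image_of_mem τ (JohnsonGraph.mem_star.2 hi))
  refine ⟨Equiv.ofBijective f hf_inj.bijective_of_finite, fun s => ?_⟩
  obtain ⟨i, j, hij, hs⟩ := card_eq_two.1 s.prop
  rw [hs, image_insert, image_singleton]
  exact eq_pair_of_mem (τ s).prop (hf_mem s i (by simp [hs])) (hf_mem s j (by simp [hs]))
    (hf_inj.ne hij)
end

section
/- For |I| = 4, every automorphism of the Johnson graph J(I,2) is either induced by a permutation of I, or is the composition of a permutation-induced automorphism with the complementation map sending each 2-element subset J to I ∖ J. -/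
instance (ι : Type*) [DecidableEq ι] : DecidableRel (johnsonGraph ι).Adj :=
  fun s t => inferInstanceAs (Decidable (s ≠ t ∧ (s.val ∩ t.val).Nonempty))

lemma Finset.map_compl {α β : Type*} [Fintype α] [Fintype β] [DecidableEq α] [DecidableEq β]
    (e : α ≃ β) (s : Finset α) : sᶜ.map e.toEmbedding = (s.map e.toEmbedding)ᶜ := by
  ext
  simp [Finset.mem_map_equiv]

namespace johnsonGraph

variable {ι κ : Type*} [DecidableEq ι] [DecidableEq κ]

def congr (e : ι ≃ κ) : johnsonGraph ι ≃g johnsonGraph κ where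
  toEquiv := e.finsetCongr.subtypeEquiv fun s => by simp
  map_rel_iff' {s t} := by
    simp [johnsonGraph, ← Finset.map_inter, Subtype.ext_iff]

@[simp]
lemma coe_congr_apply (e : ι ≃ κ) (s : {s : Finset ι // s.card = 2}) :
    (congr e s).val = s.val.map e.toEmbedding := rfl

def IsInducedUpToCompl [Fintype ι] (τ : johnsonGraph ι ≃g johnsonGraph ι) : Prop :=
  ∃ π : Equiv.Perm ι,
    (∀ s, (τ s).val = s.val.image π) ∨ (∀ s, (τ s).val = (s.val.image π)ᶜ)

lemma isInducedUpToCompl_of_conj [Fintype ι] [Fintype κ] (e : ι ≃ κ)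
    (τ : johnsonGraph ι ≃g johnsonGraph ι)
    (h : IsInducedUpToCompl ((congr e).symm.trans (τ.trans (congr e)))) :
    IsInducedUpToCompl τ := by
  obtain ⟨π, hπ⟩ := h
  have hτ (s) : (τ s).val =
      ((congr e).symm.trans (τ.trans (congr e)) (congr e s)).val.map e.symm.toEmbedding := by
    simp [Finset.map_map]
  have hconj (s : Finset ι) :
      ((s.map e.toEmbedding).image π).map e.symm.toEmbedding =
        s.image ((e.trans π).trans e.symm) := by
    simp only [Finset.map_eq_image, Finset.image_image]
    rfl
  refine ⟨(e.trans π).trans e.symm, hπ.imp (fun h s => ?_) (fun h s => ?_)⟩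
  · rw [hτ, h, coe_congr_apply, hconj]
  · rw [hτ, h, coe_congr_apply, Finset.map_compl, hconj]

lemma isInducedUpToCompl_fin_four (τ : johnsonGraph (Fin 4) ≃g johnsonGraph (Fin 4)) :
    IsInducedUpToCompl τ := by
  have hadj_iff : ∀ f : Equiv.Perm {s : Finset (Fin 4) // s.card = 2},
      (∀ s t, (johnsonGraph (Fin 4)).Adj (f s) (f t) ↔ (johnsonGraph (Fin 4)).Adj s t) →
      ∃ π : Equiv.Perm (Fin 4),
        (∀ s, (f s).val = s.val.image π) ∨ (∀ s, (f s).val = (s.val.image π)ᶜ) := by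
    set_option maxRecDepth 10000 in decide
  exact hadj_iff τ.toEquiv fun _ _ => τ.map_adj_iff

end johnsonGraph

/-- For `|I| = 4`, every automorphism of the Johnson graph `J(I,2)` is either induced
by a permutation of `I`, or is the composition of a permutation-induced automorphism
with the complementation map `J ↦ I \ J`. -/
theorem stmt_11 {ι : Type*} [DecidableEq ι] [Fintype ι]
    (h4 : Fintype.card ι = 4)
    (τ : johnsonGraph ι ≃g johnsonGraph ι) :
    ∃ π : Equiv.Perm ι,
      (∀ s : {s : Finset ι // s.card = 2}, (τ s).val = s.val.image π) ∨
      (∀ s : {s : Finset ι // s.card = 2}, (τ s).val = (s.val.image π)ᶜ) :=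
  johnsonGraph.isInducedUpToCompl_of_conj (Fintype.equivFinOfCardEq h4) τ
    (johnsonGraph.isInducedUpToCompl_fin_four _)
end

section
/- Let V be a finite-dimensional complex inner product space and X, Y, Z pairwise orthogonal subspaces with X + Y + Z = V (orthogonal sum). Suppose Y₁ ≤ X + Y is adjacent to X with the same dimension as X, Z₁ is the orthogonal complement of Y₁ in X + Y. Then Z₁ is adjacent to Y and Z₁ is orthogonal to Z. -/
/-!
Inside `X ⊔ Y`, the complement `Z₁` of `Y₁` has dimension `dim X + dim Y - dim Y₁ = dim Y`.
Its meet with `Y` is `(Y₁ ⊔ Yᗮ)ᗮ`, whose dimension is computed from `Y₁ ⊓ Yᗮ`; since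
`Y₁ ≤ X ⊔ Y` and `X ⟂ Y`, that meet is `Y₁ ⊓ X`, of codimension one in `Y₁`.
Orthogonality to `Z` is inherited from `X ⊔ Y`.
-/

open Module

namespace Submodule

variable {𝕜 E : Type*} [RCLike 𝕜] [NormedAddCommGroup E] [InnerProductSpace 𝕜 E]

theorem IsOrtho.sup_inf_orthogonal_right {U W : Submodule 𝕜 E} (h : U ⟂ W) :
    (U ⊔ W) ⊓ Wᗮ = U := by
  rw [sup_inf_assoc_of_le W h.le, inf_orthogonal_eq_bot, sup_bot_eq]

theorem IsOrtho.inf_orthogonal_right_eq_of_le_sup {U W A : Submodule 𝕜 E} (h : U ⟂ W)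
    (hA : A ≤ U ⊔ W) : A ⊓ Wᗮ = A ⊓ U := by
  conv_lhs => rw [← inf_eq_left.mpr hA]
  rw [inf_assoc, h.sup_inf_orthogonal_right]

variable [FiniteDimensional 𝕜 E]

theorem IsOrtho.finrank_sup {U W : Submodule 𝕜 E} (h : U ⟂ W) :
    finrank 𝕜 ↥(U ⊔ W) = finrank 𝕜 U + finrank 𝕜 W := by
  rw [← finrank_sup_add_finrank_inf_eq, h.disjoint.eq_bot, finrank_bot, add_zero]

theorem finrank_orthogonal_inf_add_finrank (A B : Submodule 𝕜 E) :
    finrank 𝕜 ↥(Aᗮ ⊓ B) + finrank 𝕜 A = finrank 𝕜 B + finrank 𝕜 ↥(A ⊓ Bᗮ) := by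
  have hsup := finrank_sup_add_finrank_inf_eq A Bᗮ
  have hA := finrank_add_finrank_orthogonal (A ⊔ Bᗮ)
  have hB := finrank_add_finrank_orthogonal B
  rw [← inf_orthogonal, orthogonal_orthogonal] at hA
  omega

end Submodule

theorem stmt_12_general {V : Type*} [NormedAddCommGroup V] [InnerProductSpace ℂ V]
    [FiniteDimensional ℂ V]
    (X Y Z : Submodule ℂ V)
    (hXY : Submodule.IsOrtho X Y) (hXZ : Submodule.IsOrtho X Z)
    (hYZ : Submodule.IsOrtho Y Z)
    (Y₁ : Submodule ℂ V) (hY₁ : Y₁ ≤ X ⊔ Y)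
    (hY₁dim : Module.finrank ℂ Y₁ = Module.finrank ℂ X)
    (hY₁adj : Module.finrank ℂ ↥(Y₁ ⊓ X) + 1 = Module.finrank ℂ X)
    (Z₁ : Submodule ℂ V) (hZ₁ : Z₁ = Y₁ᗮ ⊓ (X ⊔ Y)) :
    (Module.finrank ℂ Z₁ = Module.finrank ℂ Y ∧
      Module.finrank ℂ ↥(Z₁ ⊓ Y) + 1 = Module.finrank ℂ Y) ∧
    Submodule.IsOrtho Z₁ Z := by
  subst hZ₁
  have hZ₁dim := Submodule.finrank_add_inf_finrank_orthogonal hY₁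
  rw [hXY.finrank_sup] at hZ₁dim
  have hZ₁Y : Y₁ᗮ ⊓ (X ⊔ Y) ⊓ Y = Y₁ᗮ ⊓ Y := by
    rw [inf_assoc, inf_eq_right.mpr (le_sup_right : Y ≤ X ⊔ Y)]
  have hmeet := Submodule.finrank_orthogonal_inf_add_finrank Y₁ Y
  rw [hXY.inf_orthogonal_right_eq_of_le_sup hY₁] at hmeet
  refine ⟨⟨by omega, by rw [hZ₁Y]; omega⟩, ?_⟩
  exact (Submodule.isOrtho_sup_left.mpr ⟨hXZ, hYZ⟩).mono_left inf_le_right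

/-- Let `X, Y, Z` be pairwise orthogonal subspaces of a finite-dimensional complex
inner product space `V` with `X + Y + Z = V`. If `Y₁ ≤ X + Y` is adjacent to `X`
(same dimension, codimension-one intersection) and `Z₁` is the orthogonal complement
of `Y₁` in `X + Y`, then `Z₁` is adjacent to `Y` and `Z₁` is orthogonal to `Z`. -/
theorem stmt_12 {V : Type*} [NormedAddCommGroup V] [InnerProductSpace ℂ V]
    [FiniteDimensional ℂ V]
    (X Y Z : Submodule ℂ V)
    (hXY : Submodule.IsOrtho X Y) (hXZ : Submodule.IsOrtho X Z)
    (hYZ : Submodule.IsOrtho Y Z)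
    (hsup : X ⊔ Y ⊔ Z = ⊤)
    (hXpos : 1 ≤ Module.finrank ℂ X)
    (Y₁ : Submodule ℂ V) (hY₁ : Y₁ ≤ X ⊔ Y)
    (hY₁dim : Module.finrank ℂ Y₁ = Module.finrank ℂ X)
    (hY₁adj : Module.finrank ℂ ↥(Y₁ ⊓ X) + 1 = Module.finrank ℂ X)
    (Z₁ : Submodule ℂ V) (hZ₁ : Z₁ = Y₁ᗮ ⊓ (X ⊔ Y)) :
    (Module.finrank ℂ Z₁ = Module.finrank ℂ Y ∧
      Module.finrank ℂ ↥(Z₁ ⊓ Y) + 1 = Module.finrank ℂ Y) ∧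
    Submodule.IsOrtho Z₁ Z :=
  stmt_12_general X Y Z hXY hXZ hYZ Y₁ hY₁ hY₁dim hY₁adj Z₁ hZ₁
end

section
/- A semilinear automorphism S of a complex Hilbert space H of dimension ≥ 3 that maps every pair of orthogonal vectors to orthogonal vectors is a nonzero scalar multiple of a unitary or anti-unitary operator. -/
/-!
For `x ⊥ y` we have `‖x‖ = ‖y‖` iff `x + y ⊥ x - y`; since `S` is additive, it therefore
preserves equality of norms on orthogonal pairs, and, because in dimension `≥ 3` any two vectors
have a common orthogonal vector of any prescribed norm, on all pairs. The same trick applied to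
`e + a • f ⊥ conj a • e - f` (for `e ⊥ f` of equal norm) shows that `α` commutes with
conjugation. Such an automorphism maps `ℝ` to itself, hence fixes it (the only ring endomorphism
of `ℝ` is the identity), so it is the identity or conjugation. Then `S` is real-homogeneous,
`‖S x‖ = ‖S e‖ * ‖x‖` for any unit vector `e`, and `S / ‖S e‖` is a (conjugate-)linear isometry.
-/
open scoped InnerProductSpace ComplexConjugate
open Function

section Orthogonal

variable {𝕜 E : Type*} [RCLike 𝕜] [NormedAddCommGroup E] [InnerProductSpace 𝕜 E]

theorem exists_ne_zero_orthogonal_pair (hdim : 3 ≤ Module.rank 𝕜 E) (x y : E) :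
    ∃ z ≠ 0, ⟪x, z⟫_𝕜 = 0 ∧ ⟪y, z⟫_𝕜 = 0 := by
  set K := Submodule.span 𝕜 {x, y}
  have hK : K ≠ ⊤ := by
    intro hK
    have : Module.rank 𝕜 K ≤ 2 :=
      (rank_span_le _).trans (Cardinal.mk_insert_le.trans (by norm_num))
    rw [hK, rank_top] at this
    exact absurd (hdim.trans this) (by norm_num)
  have : FiniteDimensional 𝕜 K := FiniteDimensional.span_of_finite 𝕜 (Set.toFinite _)
  obtain ⟨z, hz, hz0⟩ := (Submodule.ne_bot_iff _).mp (mt Submodule.orthogonal_eq_bot_iff.mp hK)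
  exact ⟨z, hz0, hz x (Submodule.subset_span (by simp)), hz y (Submodule.subset_span (by simp))⟩

theorem exists_orthogonal_pair_norm_eq (hdim : 3 ≤ Module.rank 𝕜 E) (x y : E) {r : ℝ}
    (hr : 0 ≤ r) : ∃ z : E, ‖z‖ = r ∧ ⟪x, z⟫_𝕜 = 0 ∧ ⟪y, z⟫_𝕜 = 0 := by
  obtain ⟨z, hz, hxz, hyz⟩ := exists_ne_zero_orthogonal_pair hdim x y
  refine ⟨(r : 𝕜) • (‖z‖⁻¹ : 𝕜) • z, ?_, ?_, ?_⟩
  · rw [norm_smul, norm_smul_inv_norm hz, RCLike.norm_ofReal, abs_of_nonneg hr, mul_one]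
  · simp [inner_smul_right, hxz]
  · simp [inner_smul_right, hyz]

end Orthogonal

section Preserves

variable {𝕜 E F : Type*} [RCLike 𝕜] [NormedAddCommGroup E] [InnerProductSpace 𝕜 E]
  [NormedAddCommGroup F] [InnerProductSpace 𝕜 F]

variable (𝕜) in
def PreservesOrthogonality (f : E → F) : Prop :=
  ∀ x y, ⟪x, y⟫_𝕜 = 0 → ⟪f x, f y⟫_𝕜 = 0

namespace PreservesOrthogonality

variable {G : Type*} [FunLike G E F] [AddMonoidHomClass G E F] {f : G}

theorem norm_map_eq (hf : PreservesOrthogonality 𝕜 f) {x y : E} (hxy : ⟪x, y⟫_𝕜 = 0)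
    (hn : ‖x‖ = ‖y‖) : ‖f x‖ = ‖f y‖ := by
  have hyx : ⟪y, x⟫_𝕜 = 0 := inner_eq_zero_symm.mp hxy
  have hsum : ⟪x + y, x - y⟫_𝕜 = 0 := by
    simp only [inner_add_left, inner_sub_right, inner_self_eq_norm_sq_to_K, hxy, hyx, hn]
    ring
  have himage := hf _ _ hsum
  rw [map_add, map_sub] at himage
  simp only [inner_add_left, inner_sub_right, inner_self_eq_norm_sq_to_K, hf _ _ hxy,
    hf _ _ hyx] at himage
  have hsq : ((‖f x‖ ^ 2 : ℝ) : 𝕜) = (‖f y‖ ^ 2 : ℝ) := by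
    push_cast
    linear_combination himage
  replace hsq : ‖f x‖ ^ 2 = ‖f y‖ ^ 2 := RCLike.ofReal_injective hsq
  exact (pow_left_inj₀ (norm_nonneg _) (norm_nonneg _) two_ne_zero).mp hsq

theorem norm_map_eq_of_norm_eq (hdim : 3 ≤ Module.rank 𝕜 E) (hf : PreservesOrthogonality 𝕜 f)
    {x y : E} (h : ‖x‖ = ‖y‖) : ‖f x‖ = ‖f y‖ := by
  obtain ⟨z, hz, hxz, hyz⟩ := exists_orthogonal_pair_norm_eq (𝕜 := 𝕜) hdim x y (norm_nonneg x)
  exact (hf.norm_map_eq hxz hz.symm).trans (hf.norm_map_eq hyz (h.symm.trans hz.symm)).symm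

end PreservesOrthogonality

end Preserves

theorem Complex.ringHom_eq_id_or_conj_of_map_conj {f : ℂ →+* ℂ}
    (hf : ∀ z, f (conj z) = conj (f z)) : f = RingHom.id ℂ ∨ f = conj := by
  have hreal : ∀ r : ℝ, f r = ((f r).re : ℂ) := fun r =>
    (Complex.conj_eq_iff_re.mp (by rw [← hf, Complex.conj_ofReal])).symm
  let g : ℝ →+* ℝ :=
    { toFun := fun r => (f r).re
      map_one' := by simp
      map_mul' := fun r s => by
        rw [Complex.ofReal_mul, map_mul, hreal r, hreal s]
        simp
      map_zero' := by simp
      map_add' := fun r s => by simp }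
  have hfix : ∀ r : ℝ, f r = r := fun r => by
    rw [hreal r]
    exact congrArg _ (RingHom.congr_fun (Subsingleton.elim g (RingHom.id ℝ)) r)
  simpa only [DFunLike.ext_iff] using! Complex.real_algHom_eq_id_or_conj
    (AlgHom.mk' f fun r z => by rw [Complex.real_smul, map_mul, hfix, Complex.real_smul])

section ComplexSemilinear

variable {E F : Type*} [NormedAddCommGroup E] [InnerProductSpace ℂ E]
  [NormedAddCommGroup F] [InnerProductSpace ℂ F] {σ : ℂ →+* ℂ} {T : E →ₛₗ[σ] F}

namespace PreservesOrthogonality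

theorem map_conj (hdim : 3 ≤ Module.rank ℂ E) (hinj : Injective T)
    (hT : PreservesOrthogonality ℂ T) (a : ℂ) : σ (conj a) = conj (σ a) := by
  obtain ⟨e, he, -, -⟩ := exists_orthogonal_pair_norm_eq (𝕜 := ℂ) hdim (0 : E) 0 zero_le_one
  obtain ⟨f, hf, hef, -⟩ := exists_orthogonal_pair_norm_eq (𝕜 := ℂ) hdim e e zero_le_one
  have hfe : ⟪f, e⟫_ℂ = 0 := inner_eq_zero_symm.mp hef
  have hTe : T e ≠ 0 := (map_ne_zero_iff T hinj).mpr (by rintro rfl; simp at he)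
  have hTn : ‖T e‖ = ‖T f‖ := hT.norm_map_eq hef (he.trans hf.symm)
  have hpair : ⟪e + a • f, conj a • e - f⟫_ℂ = 0 := by
    simp only [inner_add_left, inner_sub_right, inner_smul_left, inner_smul_right,
      inner_self_eq_norm_sq_to_K, hef, hfe, he, hf]
    ring
  have himage := hT _ _ hpair
  simp only [map_add, map_sub, map_smulₛₗ, inner_add_left, inner_sub_right, inner_smul_left,
    inner_smul_right, inner_self_eq_norm_sq_to_K, hT _ _ hef, hT _ _ hfe, ← hTn] at himage
  have hTe2 : (‖T e‖ : ℂ) ^ 2 ≠ 0 := by simpa using hTe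
  exact sub_eq_zero.mp ((mul_eq_zero.mp (by linear_combination himage)).resolve_right hTe2)

theorem norm_map_eq_mul_norm (hdim : 3 ≤ Module.rank ℂ E) (hσ : ∀ r : ℝ, σ r = r)
    (hT : PreservesOrthogonality ℂ T) {e : E} (he : ‖e‖ = 1) (x : E) :
    ‖T x‖ = ‖T e‖ * ‖x‖ := by
  have : ‖T x‖ = ‖T ((‖x‖ : ℂ) • e)‖ := hT.norm_map_eq_of_norm_eq hdim (by simp [norm_smul, he])
  rw [this, map_smulₛₗ, hσ, norm_smul, Complex.norm_real, norm_norm, mul_comm]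

end PreservesOrthogonality

theorem LinearMap.exists_linearIsometryEquiv_of_norm_map_eq_mul {σ' : ℂ →+* ℂ}
    [RingHomInvPair σ σ'] [RingHomInvPair σ' σ] (hbij : Bijective T) {c : ℝ} (hc : 0 < c)
    (h : ∀ x, ‖T x‖ = c * ‖x‖) : ∃ U : E ≃ₛₗᵢ[σ] F, ∀ x, T x = (c : ℂ) • U x := by
  have hc' : (c : ℂ) ≠ 0 := by exact_mod_cast hc.ne'
  have hbij' : Bijective ((c : ℂ)⁻¹ • T) :=
    (MulAction.bijective (Units.mk0 _ (inv_ne_zero hc'))).comp hbij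
  refine ⟨{ toLinearEquiv := LinearEquiv.ofBijective _ hbij', norm_map' := fun x => ?_ },
    fun x => ?_⟩
  · simp [norm_smul, h, abs_of_pos hc, hc.ne']
  · simp [smul_smul, hc']

theorem PreservesOrthogonality.exists_smul_linearIsometryEquiv {σ' : ℂ →+* ℂ}
    [RingHomInvPair σ σ'] [RingHomInvPair σ' σ] (hσ : ∀ r : ℝ, σ r = r)
    (hdim : 3 ≤ Module.rank ℂ E) (hbij : Bijective T) (hT : PreservesOrthogonality ℂ T) :
    ∃ c : ℂ, c ≠ 0 ∧ ∃ U : E ≃ₛₗᵢ[σ] F, ∀ x, T x = c • U x := by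
  obtain ⟨e, he, -, -⟩ := exists_orthogonal_pair_norm_eq (𝕜 := ℂ) hdim (0 : E) 0 zero_le_one
  have hTe : 0 < ‖T e‖ :=
    norm_pos_iff.mpr ((map_ne_zero_iff T hbij.injective).mpr (by rintro rfl; simp at he))
  obtain ⟨U, hU⟩ := T.exists_linearIsometryEquiv_of_norm_map_eq_mul hbij hTe
    (hT.norm_map_eq_mul_norm hdim hσ he)
  exact ⟨_, by exact_mod_cast hTe.ne', U, hU⟩

end ComplexSemilinear

theorem stmt_14_general {H : Type*} [NormedAddCommGroup H] [InnerProductSpace ℂ H]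
    (hdim : 3 ≤ Module.rank ℂ H)
    (S : H → H) (hbij : Function.Bijective S)
    (hadd : ∀ x y : H, S (x + y) = S x + S y)
    (α : ℂ ≃+* ℂ) (hsmul : ∀ (a : ℂ) (x : H), S (a • x) = α a • S x)
    (horth : ∀ x y : H, (inner ℂ x y : ℂ) = 0 → (inner ℂ (S x) (S y) : ℂ) = 0) :
    ∃ c : ℂ, c ≠ 0 ∧
      ((∃ U : H ≃ₗᵢ[ℂ] H, ∀ x, S x = c • U x) ∨
       (∃ U : H ≃ₛₗᵢ[(starRingEnd ℂ)] H, ∀ x, S x = c • U x)) := by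
  let T : H →ₛₗ[(α : ℂ →+* ℂ)] H := ⟨⟨S, hadd⟩, hsmul⟩
  have hconj : ∀ a, (α : ℂ →+* ℂ) (conj a) = conj (α a) :=
    PreservesOrthogonality.map_conj (T := T) hdim hbij.injective horth
  rcases Complex.ringHom_eq_id_or_conj_of_map_conj hconj with hα | hα
  · let L : H →ₗ[ℂ] H :=
      ⟨⟨S, hadd⟩, fun a x => (hsmul a x).trans (by rw [← RingHom.congr_fun hα a]; rfl)⟩
    obtain ⟨c, hc, U, hU⟩ := PreservesOrthogonality.exists_smul_linearIsometryEquiv (T := L)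
      (fun _ => rfl) hdim hbij horth
    exact ⟨c, hc, .inl ⟨U, hU⟩⟩
  · let L : H →ₛₗ[conj] H :=
      ⟨⟨S, hadd⟩, fun a x => (hsmul a x).trans (by rw [← RingHom.congr_fun hα a]; rfl)⟩
    obtain ⟨c, hc, U, hU⟩ := PreservesOrthogonality.exists_smul_linearIsometryEquiv (T := L)
      Complex.conj_ofReal hdim hbij horth
    exact ⟨c, hc, .inr ⟨U, hU⟩⟩

/-- A semilinear automorphism `S` of a complex Hilbert space of dimension `≥ 3` that
sends orthogonal vectors to orthogonal vectors is a nonzero scalar multiple of a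
unitary or anti-unitary operator. -/
theorem stmt_14 {H : Type*} [NormedAddCommGroup H] [InnerProductSpace ℂ H]
    [CompleteSpace H] (hdim : 3 ≤ Module.rank ℂ H)
    (S : H → H) (hbij : Function.Bijective S)
    (hadd : ∀ x y : H, S (x + y) = S x + S y)
    (α : ℂ ≃+* ℂ) (hsmul : ∀ (a : ℂ) (x : H), S (a • x) = α a • S x)
    (horth : ∀ x y : H, (inner ℂ x y : ℂ) = 0 → (inner ℂ (S x) (S y) : ℂ) = 0) :
    ∃ c : ℂ, c ≠ 0 ∧
      ((∃ U : H ≃ₗᵢ[ℂ] H, ∀ x, S x = c • U x) ∨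
       (∃ U : H ≃ₛₗᵢ[(starRingEnd ℂ)] H, ∀ x, S x = c • U x)) :=
  stmt_14_general hdim S hbij hadd α hsmul horth
end

section
/- Let k ≥ 4 and let A, B, C be operators in the conjugacy class G(σ,d) with eigenvalues a₁,...,aₖ such that C is (i,j)-adjacent to A and (i',j')-adjacent to B for mutually distinct indices i, j, i', j'. Then there exists an operator C' in G(σ,d) that is (i',j')-adjacent to A and (i,j)-adjacent to B. -/
variable {V : Type*} [NormedAddCommGroup V] [InnerProductSpace ℂ V] [FiniteDimensional ℂ V]
variable {ι : Type*} [Fintype ι]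


/-- Adjacency of equi-dimensional subspaces: codimension-one intersection in each. -/
def Adjacent (X Y : Submodule ℂ V) : Prop :=
  Module.finrank ℂ ↥(X ⊓ Y) + 1 = Module.finrank ℂ X ∧
  Module.finrank ℂ X = Module.finrank ℂ Y

/-- An orthogonal decomposition of `V` into eigenspaces of prescribed dimensions `n`:
this encodes membership of the corresponding self-adjoint operator `∑ aₛ P_{Xₛ}` in
the conjugacy class `G(σ,d)`. -/
def OrthDecomp (n : ι → ℕ) (X : ι → Submodule ℂ V) : Prop :=
  (∀ s, Module.finrank ℂ (X s) = n s) ∧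
  (∀ s t, s ≠ t → Submodule.IsOrtho (X s) (X t)) ∧
  (⨆ s, X s) = ⊤

/-- `(i,j)`-adjacency of operators in `G(σ,d)`, in terms of their eigenspace families. -/
def IJAdjacent (X Y : ι → Submodule ℂ V) (i j : ι) : Prop :=
  Adjacent (X i) (Y i) ∧ Adjacent (X j) (Y j) ∧ ∀ t, t ≠ i → t ≠ j → X t = Y t

lemma Adjacent.symm {X Y : Submodule ℂ V} (h : Adjacent X Y) : Adjacent Y X := by
  obtain ⟨h1, h2⟩ := h
  refine ⟨?_, h2.symm⟩
  rw [inf_comm, ← h2]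
  exact h1

lemma finrank_sup_ortho {X Y : Submodule ℂ V} (h : Submodule.IsOrtho X Y) :
    Module.finrank ℂ ↥(X ⊔ Y) = Module.finrank ℂ X + Module.finrank ℂ Y := by
  have h2 := Submodule.finrank_sup_add_finrank_inf_eq X Y
  rw [h.disjoint.eq_bot] at h2
  simpa using h2

lemma key_le {Z : ι → Submodule ℂ V}
    (hortho : ∀ s t, s ≠ t → Submodule.IsOrtho (Z s) (Z t))
    (htop : (⨆ s, Z s) = ⊤) {i j : ι} (hij : i ≠ j)
    {P : Submodule ℂ V} (hP : ∀ t, t ≠ i → t ≠ j → Submodule.IsOrtho P (Z t)) :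
    P ≤ Z i ⊔ Z j := by
  set K : Submodule ℂ V := ⨆ t, ⨆ (_ : t ≠ i ∧ t ≠ j), Z t with hK
  have hPK : Submodule.IsOrtho P K := Submodule.isOrtho_iSup_right.2 fun t =>
    Submodule.isOrtho_iSup_right.2 fun ht => hP t ht.1 ht.2
  have hZK : Submodule.IsOrtho (Z i ⊔ Z j) K :=
    Submodule.isOrtho_iSup_right.2 fun t => Submodule.isOrtho_iSup_right.2 fun ht =>
      Submodule.isOrtho_sup_left.2 ⟨hortho i t (Ne.symm ht.1), hortho j t (Ne.symm ht.2)⟩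
  have hsup : (Z i ⊔ Z j) ⊔ K = ⊤ := by
    rw [← top_le_iff, ← htop]
    refine iSup_le fun t => ?_
    by_cases h1 : t = i
    · subst h1; exact le_sup_of_le_left le_sup_left
    by_cases h2 : t = j
    · subst h2; exact le_sup_of_le_left le_sup_right
    · exact le_sup_of_le_right (le_iSup_of_le t (le_iSup_of_le ⟨h1, h2⟩ le_rfl))
  have h1 : Module.finrank ℂ ↥(Z i ⊔ Z j) + Module.finrank ℂ K = Module.finrank ℂ V := by
    have h3 := finrank_sup_ortho hZK
    rw [hsup] at h3
    rw [← h3, finrank_top]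
  have h2 : Module.finrank ℂ K + Module.finrank ℂ ↥Kᗮ = Module.finrank ℂ V :=
    Submodule.finrank_add_finrank_orthogonal K
  have hle : Z i ⊔ Z j ≤ Kᗮ := Submodule.isOrtho_iff_le.1 hZK
  have heq : Z i ⊔ Z j = Kᗮ := Submodule.eq_of_le_of_finrank_eq hle (by omega)
  rw [heq]
  exact Submodule.isOrtho_iff_le.1 hPK

/-- For `k ≥ 4`: if `C` (eigenspaces `Z`) is `(i,j)`-adjacent to `A` (eigenspaces `X`)
and `(i',j')`-adjacent to `B` (eigenspaces `Y`) for mutually distinct `i, j, i', j'`,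
then there is an operator `C'` of the class that is `(i',j')`-adjacent to `A` and
`(i,j)`-adjacent to `B`. -/
theorem stmt_17 (a : ι → ℝ) (ha : Function.Injective a) (h4 : 4 ≤ Fintype.card ι)
    (n : ι → ℕ) (X Y Z : ι → Submodule ℂ V)
    (hX : OrthDecomp n X) (hY : OrthDecomp n Y) (hZ : OrthDecomp n Z)
    (i j i' j' : ι)
    (hdist : i ≠ j ∧ i ≠ i' ∧ i ≠ j' ∧ j ≠ i' ∧ j ≠ j' ∧ i' ≠ j')
    (hCA : IJAdjacent Z X i j) (hCB : IJAdjacent Z Y i' j') :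
    ∃ W : ι → Submodule ℂ V, OrthDecomp n W ∧
      IJAdjacent W X i' j' ∧ IJAdjacent W Y i j := by
  classical
  obtain ⟨hij, hii', hij', hji', hjj', hi'j'⟩ := hdist
  obtain ⟨hXd, hXo, hXt⟩ := hX
  obtain ⟨hYd, hYo, hYt⟩ := hY
  obtain ⟨hZd, hZo, hZt⟩ := hZ
  obtain ⟨hAi, hAj, hAeq⟩ := hCA
  obtain ⟨hBi, hBj, hBeq⟩ := hCB
  set W : ι → Submodule ℂ V := fun t =>
    if t = i then X i else if t = j then X j else if t = i' then Y i'
      else if t = j' then Y j' else Z t with hWdef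
  have hWi : W i = X i := by simp [hWdef]
  have hWj : W j = X j := by simp [hWdef, hij.symm]
  have hWi' : W i' = Y i' := by simp [hWdef, hii'.symm, hji'.symm]
  have hWj' : W j' = Y j' := by simp [hWdef, hij'.symm, hjj'.symm, hi'j'.symm]
  have hWo : ∀ t, t ≠ i → t ≠ j → t ≠ i' → t ≠ j' → W t = Z t := by
    intro t h1 h2 h3 h4'; simp [hWdef, h1, h2, h3, h4']
  -- orthogonality facts
  have oXiZ : ∀ t, t ≠ i → t ≠ j → Submodule.IsOrtho (X i) (Z t) := fun t h1 h2 => by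
    rw [hAeq t h1 h2]; exact hXo i t h1.symm
  have oXjZ : ∀ t, t ≠ i → t ≠ j → Submodule.IsOrtho (X j) (Z t) := fun t h1 h2 => by
    rw [hAeq t h1 h2]; exact hXo j t h2.symm
  have oYiZ : ∀ t, t ≠ i' → t ≠ j' → Submodule.IsOrtho (Y i') (Z t) := fun t h1 h2 => by
    rw [hBeq t h1 h2]; exact hYo i' t h1.symm
  have oYjZ : ∀ t, t ≠ i' → t ≠ j' → Submodule.IsOrtho (Y j') (Z t) := fun t h1 h2 => by
    rw [hBeq t h1 h2]; exact hYo j' t h2.symm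
  have hXiZ : X i ≤ Z i ⊔ Z j := key_le hZo hZt hij oXiZ
  have hXjZ : X j ≤ Z i ⊔ Z j := key_le hZo hZt hij oXjZ
  have hYiZ : Y i' ≤ Z i' ⊔ Z j' := key_le hZo hZt hi'j' oYiZ
  have hYjZ : Y j' ≤ Z i' ⊔ Z j' := key_le hZo hZt hi'j' oYjZ
  have hZZ : Submodule.IsOrtho (Z i ⊔ Z j) (Z i' ⊔ Z j') :=
    Submodule.isOrtho_sup_left.2 ⟨Submodule.isOrtho_sup_right.2 ⟨hZo i i' hii', hZo i j' hij'⟩,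
      Submodule.isOrtho_sup_right.2 ⟨hZo j i' hji', hZo j j' hjj'⟩⟩
  have cross : ∀ P Q : Submodule ℂ V, P ≤ Z i ⊔ Z j → Q ≤ Z i' ⊔ Z j' →
      Submodule.IsOrtho P Q := fun P Q hP hQ => Submodule.IsOrtho.mono hP hQ hZZ
  have oXX : Submodule.IsOrtho (X i) (X j) := hXo i j hij
  have oYY : Submodule.IsOrtho (Y i') (Y j') := hYo i' j' hi'j'
  -- orthogonality with generic Z
  have hgen : ∀ u t, u ≠ i → u ≠ j → u ≠ i' → u ≠ j' → t ≠ u →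
      Submodule.IsOrtho (W t) (Z u) := by
    intro u t h1 h2 h3 h4' htu
    by_cases c1 : t = i
    · subst c1; rw [hWi]; exact oXiZ u h1 h2
    by_cases c2 : t = j
    · subst c2; rw [hWj]; exact oXjZ u h1 h2
    by_cases c3 : t = i'
    · subst c3; rw [hWi']; exact oYiZ u h3 h4'
    by_cases c4 : t = j'
    · subst c4; rw [hWj']; exact oYjZ u h3 h4'
    · rw [hWo t c1 c2 c3 c4]; exact hZo t u htu
  have horthoW : ∀ s t, s ≠ t → Submodule.IsOrtho (W s) (W t) := by
    intro s t hst
    by_cases hs : s ≠ i ∧ s ≠ j ∧ s ≠ i' ∧ s ≠ j'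
    · rw [hWo s hs.1 hs.2.1 hs.2.2.1 hs.2.2.2]
      exact (hgen s t hs.1 hs.2.1 hs.2.2.1 hs.2.2.2 hst.symm).symm
    by_cases ht : t ≠ i ∧ t ≠ j ∧ t ≠ i' ∧ t ≠ j'
    · rw [hWo t ht.1 ht.2.1 ht.2.2.1 ht.2.2.2]
      exact hgen t s ht.1 ht.2.1 ht.2.2.1 ht.2.2.2 hst
    -- both special
    by_cases cs1 : s = i
    · subst cs1
      by_cases ct1 : t = j
      · subst ct1; rw [hWi, hWj]; exact oXX
      by_cases ct2 : t = i'
      · subst ct2; rw [hWi, hWi']; exact cross _ _ hXiZ hYiZ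
      by_cases ct3 : t = j'
      · subst ct3; rw [hWi, hWj']; exact cross _ _ hXiZ hYjZ
      · exact absurd ⟨hst.symm, ct1, ct2, ct3⟩ ht
    by_cases cs2 : s = j
    · subst cs2
      by_cases ct1 : t = i
      · subst ct1; rw [hWj, hWi]; exact oXX.symm
      by_cases ct2 : t = i'
      · subst ct2; rw [hWj, hWi']; exact cross _ _ hXjZ hYiZ
      by_cases ct3 : t = j'
      · subst ct3; rw [hWj, hWj']; exact cross _ _ hXjZ hYjZ
      · exact absurd ⟨ct1, hst.symm, ct2, ct3⟩ ht
    by_cases cs3 : s = i'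
    · subst cs3
      by_cases ct1 : t = i
      · subst ct1; rw [hWi', hWi]; exact (cross _ _ hXiZ hYiZ).symm
      by_cases ct2 : t = j
      · subst ct2; rw [hWi', hWj]; exact (cross _ _ hXjZ hYiZ).symm
      by_cases ct3 : t = j'
      · subst ct3; rw [hWi', hWj']; exact oYY
      · exact absurd ⟨ct1, ct2, hst.symm, ct3⟩ ht
    by_cases cs4 : s = j'
    · subst cs4
      by_cases ct1 : t = i
      · subst ct1; rw [hWj', hWi]; exact (cross _ _ hXiZ hYjZ).symm
      by_cases ct2 : t = j
      · subst ct2; rw [hWj', hWj]; exact (cross _ _ hXjZ hYjZ).symm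
      by_cases ct3 : t = i'
      · subst ct3; rw [hWj', hWi']; exact oYY.symm
      · exact absurd ⟨ct1, ct2, ct3, hst.symm⟩ ht
    · exact absurd ⟨cs1, cs2, cs3, cs4⟩ hs
  -- sup equalities
  have hXsup : X i ⊔ X j = Z i ⊔ Z j := by
    apply Submodule.eq_of_le_of_finrank_eq (sup_le hXiZ hXjZ)
    rw [finrank_sup_ortho oXX, finrank_sup_ortho (hZo i j hij), hXd i, hXd j, hZd i, hZd j]
  have hYsup : Y i' ⊔ Y j' = Z i' ⊔ Z j' := by
    apply Submodule.eq_of_le_of_finrank_eq (sup_le hYiZ hYjZ)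
    rw [finrank_sup_ortho oYY, finrank_sup_ortho (hZo i' j' hi'j'), hYd i', hYd j',
      hZd i', hZd j']
  have htopW : (⨆ s, W s) = ⊤ := by
    rw [← top_le_iff, ← hZt]
    refine iSup_le fun t => ?_
    have hWiLe : X i ⊔ X j ≤ ⨆ s, W s :=
      sup_le (by rw [← hWi]; exact le_iSup W i) (by rw [← hWj]; exact le_iSup W j)
    have hWi'Le : Y i' ⊔ Y j' ≤ ⨆ s, W s :=
      sup_le (by rw [← hWi']; exact le_iSup W i') (by rw [← hWj']; exact le_iSup W j')
    by_cases c1 : t = i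
    · subst c1; exact le_trans (hXsup ▸ le_sup_left) hWiLe
    by_cases c2 : t = j
    · subst c2; exact le_trans (hXsup ▸ le_sup_right) hWiLe
    by_cases c3 : t = i'
    · subst c3; exact le_trans (hYsup ▸ le_sup_left) hWi'Le
    by_cases c4 : t = j'
    · subst c4; exact le_trans (hYsup ▸ le_sup_right) hWi'Le
    · rw [← hWo t c1 c2 c3 c4]; exact le_iSup W t
  refine ⟨W, ⟨?_, horthoW, htopW⟩, ⟨?_, ?_, ?_⟩, ⟨?_, ?_, ?_⟩⟩
  · intro s
    by_cases c1 : s = i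
    · rw [c1, hWi]; exact hXd i
    by_cases c2 : s = j
    · rw [c2, hWj]; exact hXd j
    by_cases c3 : s = i'
    · rw [c3, hWi']; exact hYd i'
    by_cases c4 : s = j'
    · rw [c4, hWj']; exact hYd j'
    · rw [hWo s c1 c2 c3 c4]; exact hZd s
  · rw [hWi', ← hAeq i' hii'.symm hji'.symm]; exact hBi.symm
  · rw [hWj', ← hAeq j' hij'.symm hjj'.symm]; exact hBj.symm
  · intro t h1 h2
    by_cases c1 : t = i
    · subst c1; exact hWi
    by_cases c2 : t = j
    · subst c2; exact hWj
    · rw [hWo t c1 c2 h1 h2, hAeq t c1 c2]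
  · rw [hWi, ← hBeq i hii' hij']; exact hAi.symm
  · rw [hWj, ← hBeq j hji' hjj']; exact hAj.symm
  · intro t h1 h2
    by_cases c3 : t = i'
    · subst c3; exact hWi'
    by_cases c4 : t = j'
    · subst c4; exact hWj'
    · rw [hWo t h1 h2 c3 c4, hBeq t c3 c4]
end
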